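/- arXiv:2212.07045 — 3 statements merged into one kernel-verified Lean document; each statement's English description precedes it below -/
import Mathlib

section
/- Let x and y be bounded operators on a Hilbert space H = H₁ ⊕ H₂ ⊕ H₃, written in 3×3 block form. Suppose the only nonzero blocks of x are among indices {1,2}×{1,2} and the only nonzero blocks of y are among {2,3}×{2,3}. If ‖x − y‖ ≤ ε, then the operator z whose only nonzero block is the (2,2)-block (x_{2,2} + y_{2,2})/2 satisfies ‖x − z‖ ≤ 4ε and ‖y − z‖ ≤ 4ε. -/
/-!
Write `d = x - y`. Since `y` vanishes on the first block row and column, the blocks `x₁₁, x₁₂,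
x₂₁` of `x` are the corresponding blocks of `d`, and `x - z = P₁ d + P₂ d P₁ + ½ P₂ d P₂`.
Compressions by orthogonal projections do not increase the norm, so `‖x - z‖ ≤ (5/2) ‖d‖`; the
bound for `y` is the same statement with the roles of `(P₁, x)` and `(P₃, y)` exchanged.
-/

section Corner

variable {R : Type*} [SemigroupWithZero R] {p e : R}

theorem mul_corner_eq_zero (h : p * e = 0) (a : R) : p * (e * a * e) = 0 := by
  rw [← mul_assoc, ← mul_assoc, h, zero_mul, zero_mul]

theorem corner_mul_eq_zero (h : e * p = 0) (a : R) : e * a * e * p = 0 := by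
  rw [mul_assoc, h, mul_zero]

end Corner

section Compression

variable {𝕜 A : Type*} [RCLike 𝕜] [NormedRing A] [NormedAlgebra 𝕜 A]

theorem norm_sub_half_compression_le {p q x y : A} (hp : ‖p‖ ≤ 1) (hq : ‖q‖ ≤ 1)
    (hpq : p * (p + q) = p) (hx : (p + q) * x * (p + q) = x) (hpy : p * y = 0)
    (hyp : y * p = 0) :
    ‖x - (2 : 𝕜)⁻¹ • (q * (x + y) * q)‖ ≤ 5 / 2 * ‖x - y‖ := by
  have hpx : p * x * (p + q) = p * x := by
    conv_rhs => rw [← hx, ← mul_assoc, ← mul_assoc, hpq]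
  have hx_blocks : x = p * x + q * x * p + q * x * q := by
    calc x = (p + q) * x * (p + q) := hx.symm
      _ = p * x * (p + q) + q * x * p + q * x * q := by noncomm_ring
      _ = p * x + q * x * p + q * x * q := by rw [hpx]
  have h_eq : x - (2 : 𝕜)⁻¹ • (q * (x + y) * q) =
      p * (x - y) + q * (x - y) * p + (2 : 𝕜)⁻¹ • (q * (x - y) * q) := by
    rw [mul_sub p, hpy, sub_zero, mul_sub q, sub_mul, mul_assoc q y p, hyp, mul_zero, sub_zero]
    nth_rewrite 1 [hx_blocks]
    simp only [mul_add, add_mul, sub_mul]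
    module
  have h_left : ‖p * (x - y)‖ ≤ ‖x - y‖ := by simpa using norm_mul_le_of_le hp le_rfl
  have h_both (a b : A) (ha : ‖a‖ ≤ 1) (hb : ‖b‖ ≤ 1) : ‖a * (x - y) * b‖ ≤ ‖x - y‖ := by
    simpa using norm_mul_le_of_le (norm_mul_le_of_le ha le_rfl) hb
  calc ‖x - (2 : 𝕜)⁻¹ • (q * (x + y) * q)‖
      = ‖p * (x - y) + q * (x - y) * p + (2 : 𝕜)⁻¹ • (q * (x - y) * q)‖ := by rw [h_eq]
    _ ≤ ‖p * (x - y)‖ + ‖q * (x - y) * p‖ + ‖(2 : 𝕜)⁻¹ • (q * (x - y) * q)‖ := norm_add₃_le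
    _ ≤ ‖x - y‖ + ‖x - y‖ + 2⁻¹ * ‖x - y‖ := by
        rw [norm_smul, norm_inv, RCLike.norm_ofNat]
        gcongr
        · exact h_both q p hq hp
        · exact h_both q q hq hq
    _ = 5 / 2 * ‖x - y‖ := by ring

end Compression

theorem block_CIA_property_general
    {H : Type*} [NormedAddCommGroup H] [InnerProductSpace ℂ H] [CompleteSpace H]
    (P₁ P₂ P₃ x y : H →L[ℂ] H) (ε : ℝ)
    (h₁sa : IsSelfAdjoint P₁) (h₂sa : IsSelfAdjoint P₂) (h₃sa : IsSelfAdjoint P₃)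
    (h₁ : P₁ * P₁ = P₁) (h₂ : P₂ * P₂ = P₂) (h₃ : P₃ * P₃ = P₃)
    (h₁₂ : P₁ * P₂ = 0) (h₁₃ : P₁ * P₃ = 0) (h₂₃ : P₂ * P₃ = 0)
    (h₂₁ : P₂ * P₁ = 0) (h₃₁ : P₃ * P₁ = 0) (h₃₂ : P₃ * P₂ = 0)
    (hx : (P₁ + P₂) * x * (P₁ + P₂) = x) (hy : (P₂ + P₃) * y * (P₂ + P₃) = y)
    (hxy : ‖x - y‖ ≤ ε) :
    ‖x - (2 : ℂ)⁻¹ • (P₂ * (x + y) * P₂)‖ ≤ 4 * ε ∧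
    ‖y - (2 : ℂ)⁻¹ • (P₂ * (x + y) * P₂)‖ ≤ 4 * ε := by
  have hP₁ := IsStarProjection.norm_le P₁ ⟨h₁, h₁sa⟩
  have hP₂ := IsStarProjection.norm_le P₂ ⟨h₂, h₂sa⟩
  have hP₃ := IsStarProjection.norm_le P₃ ⟨h₃, h₃sa⟩
  have hP₁y : P₁ * y = 0 := hy ▸ mul_corner_eq_zero (by rw [mul_add, h₁₂, h₁₃, add_zero]) y
  have hyP₁ : y * P₁ = 0 := hy ▸ corner_mul_eq_zero (by rw [add_mul, h₂₁, h₃₁, add_zero]) y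
  have hP₃x : P₃ * x = 0 := hx ▸ mul_corner_eq_zero (by rw [mul_add, h₃₁, h₃₂, add_zero]) x
  have hxP₃ : x * P₃ = 0 := hx ▸ corner_mul_eq_zero (by rw [add_mul, h₁₃, h₂₃, add_zero]) x
  have hx_le := norm_sub_half_compression_le (𝕜 := ℂ) hP₁ hP₂ (by rw [mul_add, h₁, h₁₂, add_zero])
    hx hP₁y hyP₁
  have hy_le := norm_sub_half_compression_le (𝕜 := ℂ) hP₃ hP₂ (by rw [mul_add, h₃, h₃₂, add_zero])
    (add_comm P₂ P₃ ▸ hy) hP₃x hxP₃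
  rw [add_comm y x, norm_sub_rev y x] at hy_le
  have := norm_nonneg (x - y)
  constructor <;> linarith

/-- The complete intersection approximation (CIA) property for corner subalgebras:
if x is supported on the blocks {1,2}×{1,2}, y is supported on {2,3}×{2,3} and
‖x − y‖ ≤ ε, then the middle compression z = P₂((x+y)/2)P₂ is 4ε-close to both. -/
theorem block_CIA_property
    {H : Type*} [NormedAddCommGroup H] [InnerProductSpace ℂ H] [CompleteSpace H]
    (P₁ P₂ P₃ x y : H →L[ℂ] H) (ε : ℝ)
    (h₁sa : IsSelfAdjoint P₁) (h₂sa : IsSelfAdjoint P₂) (h₃sa : IsSelfAdjoint P₃)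
    (h₁ : P₁ * P₁ = P₁) (h₂ : P₂ * P₂ = P₂) (h₃ : P₃ * P₃ = P₃)
    (h₁₂ : P₁ * P₂ = 0) (h₁₃ : P₁ * P₃ = 0) (h₂₃ : P₂ * P₃ = 0)
    (h₂₁ : P₂ * P₁ = 0) (h₃₁ : P₃ * P₁ = 0) (h₃₂ : P₃ * P₂ = 0)
    (hsum : P₁ + P₂ + P₃ = 1)
    (hx : (P₁ + P₂) * x * (P₁ + P₂) = x) (hy : (P₂ + P₃) * y * (P₂ + P₃) = y)
    (hxy : ‖x - y‖ ≤ ε) :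
    ‖x - (2 : ℂ)⁻¹ • (P₂ * (x + y) * P₂)‖ ≤ 4 * ε ∧
    ‖y - (2 : ℂ)⁻¹ • (P₂ * (x + y) * P₂)‖ ≤ 4 * ε :=
  block_CIA_property_general P₁ P₂ P₃ x y ε h₁sa h₂sa h₃sa h₁ h₂ h₃ h₁₂ h₁₃ h₂₃ h₂₁ h₃₁ h₃₂ hx hy
    hxy
end

section
/- Let A be a unital C*-algebra and u, v ∈ A two ε-quasi-unitaries (i.e., ‖u*u−1‖ < ε, ‖uu*−1‖ < ε, and similarly for v) with 0 < ε < 1/4. Then in M₂(A), the path t ↦ diag(u, 1) · R(t) · diag(1, v) · R(t)*, where R(t) is the rotation matrix [[cos(πt/2), −sin(πt/2)], [sin(πt/2), cos(πt/2)]], is a norm-continuous path of 3ε-quasi-unitaries from diag(u, v) (at t = 0) to diag(uv, 1) (at t = 1). -/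
open ContinuousLinearMap

variable {H : Type*} [NormedAddCommGroup H] [InnerProductSpace ℂ H]

/-- The 2×2 block operator `[[a, b], [c, d]]` on the Hilbert space `H ⊕ H`
(with its ℓ²-sum inner product), realizing `M₂(B(H))` as operators. -/
noncomputable def blk (a b c d : H →L[ℂ] H) :
    WithLp 2 (H × H) →L[ℂ] WithLp 2 (H × H) :=
  (((WithLp.prodContinuousLinearEquiv 2 ℂ H H).symm :
      (H × H) →L[ℂ] WithLp 2 (H × H)) ∘L ((a.coprod b).prod (c.coprod d))) ∘L
    ((WithLp.prodContinuousLinearEquiv 2 ℂ H H : WithLp 2 (H × H) ≃L[ℂ] (H × H)) :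
      WithLp 2 (H × H) →L[ℂ] (H × H))

/-- The rotation homotopy `t ↦ diag(u,1)·R(t)·diag(1,v)·R(t)*` in `M₂(B(H))`,
where `R(t)` is the rotation by `πt/2`. -/
noncomputable def rotationPath (u v : H →L[ℂ] H) (t : ℝ) :
    WithLp 2 (H × H) →L[ℂ] WithLp 2 (H × H) :=
  blk u 0 0 1 *
    blk ((Real.cos (Real.pi * t / 2) : ℂ) • 1) (-((Real.sin (Real.pi * t / 2) : ℂ) • 1))
      ((Real.sin (Real.pi * t / 2) : ℂ) • 1) ((Real.cos (Real.pi * t / 2) : ℂ) • 1) *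
    blk 1 0 0 v *
    blk ((Real.cos (Real.pi * t / 2) : ℂ) • 1) ((Real.sin (Real.pi * t / 2) : ℂ) • 1)
      (-((Real.sin (Real.pi * t / 2) : ℂ) • 1)) ((Real.cos (Real.pi * t / 2) : ℂ) • 1)

/-! Write the path as `D₁ * (R D₂ R⋆)` with `D₁ = diag(u, 1)` and `D₂ = diag(1, v)`, which are
ε-quasi-unitary, and `R` the rotation, which is unitary. Conjugation by a unitary preserves
ε-quasi-unitarity, and the product of two ε-quasi-unitaries is `(2 + ε)ε`-quasi-unitary because
`(xy)⋆(xy) - 1 = y⋆(x⋆x - 1)y + (y⋆y - 1)` and `‖y‖² < 1 + ε` by the C⋆-identity; for `ε < 1`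
this is below `3ε`. At the endpoints `R` is `1` and `[[0, -1], [1, 0]]`. -/

section QuasiUnitary

variable {A : Type*} [NormedRing A] [StarRing A]

def IsQuasiUnitary (ε : ℝ) (x : A) : Prop :=
  ‖star x * x - 1‖ < ε ∧ ‖x * star x - 1‖ < ε

variable {ε : ℝ} {x y : A}

theorem isQuasiUnitary_one (hε : 0 < ε) : IsQuasiUnitary ε (1 : A) := by
  simp [IsQuasiUnitary, hε]

theorem IsQuasiUnitary.mono {δ : ℝ} (hx : IsQuasiUnitary ε x) (hεδ : ε ≤ δ) : IsQuasiUnitary δ x :=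
  ⟨hx.1.trans_le hεδ, hx.2.trans_le hεδ⟩

protected theorem IsQuasiUnitary.star (hx : IsQuasiUnitary ε x) : IsQuasiUnitary ε (star x) := by
  simpa only [IsQuasiUnitary, star_star] using hx.symm

variable [CStarRing A]

theorem CStarRing.norm_one_le : ‖(1 : A)‖ ≤ 1 := by
  rcases subsingleton_or_nontrivial A with _ | _
  · simp [Subsingleton.elim (1 : A) 0]
  · exact CStarRing.norm_one.le

namespace IsQuasiUnitary

theorem norm_mul_self_lt (hx : IsQuasiUnitary ε x) : ‖x‖ * ‖x‖ < 1 + ε :=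
  calc ‖x‖ * ‖x‖ = ‖star x * x - 1 + 1‖ := by rw [sub_add_cancel, CStarRing.norm_star_mul_self]
    _ ≤ ‖star x * x - 1‖ + ‖(1 : A)‖ := norm_add_le _ _
    _ < 1 + ε := by linarith [hx.1, CStarRing.norm_one_le (A := A)]

theorem norm_star_mul_mul_self_sub_one_lt (hx : IsQuasiUnitary ε x) (hy : IsQuasiUnitary ε y) :
    ‖star (x * y) * (x * y) - 1‖ < (2 + ε) * ε := by
  have hdecomp : star (x * y) * (x * y) - 1 = star y * (star x * x - 1) * y + (star y * y - 1) := by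
    simp only [star_mul, mul_sub, sub_mul, mul_one, mul_assoc]
    abel
  have hy_sq := hy.norm_mul_self_lt
  calc ‖star (x * y) * (x * y) - 1‖
      ≤ ‖star y‖ * ‖star x * x - 1‖ * ‖y‖ + ‖star y * y - 1‖ := by
        rw [hdecomp]
        exact (norm_add_le _ _).trans (add_le_add_left norm_mul₃_le _)
    _ = (‖y‖ * ‖y‖) * ‖star x * x - 1‖ + ‖star y * y - 1‖ := by rw [norm_star]; ring
    _ < (1 + ε) * ε + ε := by
        refine add_lt_add_of_le_of_lt ?_ hy.1
        exact mul_le_mul hy_sq.le hx.1.le (norm_nonneg _) (by linarith [mul_self_nonneg ‖y‖])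
    _ = (2 + ε) * ε := by ring

theorem mul (hx : IsQuasiUnitary ε x) (hy : IsQuasiUnitary ε y) :
    IsQuasiUnitary ((2 + ε) * ε) (x * y) := by
  refine ⟨hx.norm_star_mul_mul_self_sub_one_lt hy, ?_⟩
  simpa only [star_mul, star_star] using hy.star.norm_star_mul_mul_self_sub_one_lt hx.star

theorem conj {u : A} (hx : IsQuasiUnitary ε x) (hu : u ∈ unitary A) :
    IsQuasiUnitary ε (u * x * star u) := by
  have hcancel : ∀ z : A, star u * (u * z) = z := fun z => by
    rw [← mul_assoc, Unitary.star_mul_self_of_mem hu, one_mul]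
  have hconj_err : ∀ z : A, star (u * z * star u) * (u * z * star u) - 1 =
      u * (star z * z - 1) * star u := fun z => by
    simp only [star_mul, star_star, mul_sub, sub_mul, mul_one, mul_assoc, hcancel,
      Unitary.mul_star_self_of_mem hu]
  have hconj_norm : ∀ z : A, ‖u * z * star u‖ = ‖z‖ := fun z => by
    rw [CStarRing.norm_mul_mem_unitary _ (Unitary.star_mem hu), CStarRing.norm_mem_unitary_mul _ hu]
  constructor
  · rw [hconj_err, hconj_norm]
    exact hx.1
  · have h := hconj_err (star x)
    rw [star_star, show u * star x * star u = star (u * x * star u) by simp [mul_assoc],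
      star_star] at h
    rw [h, hconj_norm]
    exact hx.2

end IsQuasiUnitary

end QuasiUnitary

@[simp]
theorem blk_apply_fst (a b c d : H →L[ℂ] H) (x : WithLp 2 (H × H)) :
    (blk a b c d x).fst = a x.fst + b x.snd := rfl

@[simp]
theorem blk_apply_snd (a b c d : H →L[ℂ] H) (x : WithLp 2 (H × H)) :
    (blk a b c d x).snd = c x.fst + d x.snd := rfl

theorem ext_fst_snd {f g : WithLp 2 (H × H) →L[ℂ] WithLp 2 (H × H)}
    (hfst : ∀ x, (f x).fst = (g x).fst) (hsnd : ∀ x, (f x).snd = (g x).snd) : f = g :=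
  ext fun x => WithLp.ofLp_injective 2 (Prod.ext (hfst x) (hsnd x))

theorem blk_mul (a b c d a' b' c' d' : H →L[ℂ] H) :
    blk a b c d * blk a' b' c' d' =
      blk (a * a' + b * c') (a * b' + b * d') (c * a' + d * c') (c * b' + d * d') := by
  refine ext_fst_snd (fun x => ?_) (fun x => ?_) <;> simp <;> abel

theorem blk_one : (blk 1 0 0 1 : WithLp 2 (H × H) →L[ℂ] WithLp 2 (H × H)) = 1 := by
  refine ext_fst_snd (fun x => ?_) (fun x => ?_) <;> simp

theorem blk_add (a b c d a' b' c' d' : H →L[ℂ] H) :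
    blk a b c d + blk a' b' c' d' = blk (a + a') (b + b') (c + c') (d + d') := by
  refine ext_fst_snd (fun x => ?_) (fun x => ?_) <;> simp <;> abel

theorem blk_sub (a b c d a' b' c' d' : H →L[ℂ] H) :
    blk a b c d - blk a' b' c' d' = blk (a - a') (b - b') (c - c') (d - d') := by
  refine ext_fst_snd (fun x => ?_) (fun x => ?_) <;> simp <;> abel

theorem blk_smul (z : ℂ) (a b c d : H →L[ℂ] H) :
    z • blk a b c d = blk (z • a) (z • b) (z • c) (z • d) := by
  refine ext_fst_snd (fun x => ?_) (fun x => ?_) <;> simp [smul_add]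

theorem star_blk [CompleteSpace H] (a b c d : H →L[ℂ] H) :
    star (blk a b c d) = blk (star a) (star c) (star b) (star d) := by
  rw [star_eq_adjoint]
  refine ((eq_adjoint_iff _ _).mpr fun x y => ?_).symm
  simp only [WithLp.ofLp_fst, WithLp.ofLp_snd, blk_apply_fst, blk_apply_snd,
    WithLp.prod_inner_apply, star_eq_adjoint, inner_add_left, inner_add_right, adjoint_inner_left]
  ring

theorem norm_blk_diag_le (a d : H →L[ℂ] H) : ‖blk a 0 0 d‖ ≤ max ‖a‖ ‖d‖ := by
  set m := max ‖a‖ ‖d‖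
  refine opNorm_le_bound _ ((norm_nonneg a).trans (le_max_left _ _)) fun x => ?_
  have hfst : ‖a x.fst‖ ≤ m * ‖x.fst‖ :=
    (a.le_opNorm _).trans (mul_le_mul_of_nonneg_right (le_max_left _ _) (norm_nonneg _))
  have hsnd : ‖d x.snd‖ ≤ m * ‖x.snd‖ :=
    (d.le_opNorm _).trans (mul_le_mul_of_nonneg_right (le_max_right _ _) (norm_nonneg _))
  refine le_of_sq_le_sq ?_ (by positivity)
  calc ‖blk a 0 0 d x‖ ^ 2 = ‖a x.fst‖ ^ 2 + ‖d x.snd‖ ^ 2 := by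
        simp [WithLp.prod_norm_sq_eq_of_L2]
    _ ≤ (m * ‖x.fst‖) ^ 2 + (m * ‖x.snd‖) ^ 2 := by gcongr
    _ = (m * ‖x‖) ^ 2 := by rw [mul_pow _ ‖x‖, WithLp.prod_norm_sq_eq_of_L2]; ring

theorem isQuasiUnitary_blk_diag [CompleteSpace H] {ε : ℝ} {a d : H →L[ℂ] H}
    (ha : IsQuasiUnitary ε a) (hd : IsQuasiUnitary ε d) : IsQuasiUnitary ε (blk a 0 0 d) := by
  have hstar_mul : star (blk a 0 0 d) * blk a 0 0 d - 1 =
      blk (star a * a - 1) 0 0 (star d * d - 1) := by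
    rw [star_blk, blk_mul, ← blk_one, blk_sub]; simp
  have hmul_star : blk a 0 0 d * star (blk a 0 0 d) - 1 =
      blk (a * star a - 1) 0 0 (d * star d - 1) := by
    rw [star_blk, blk_mul, ← blk_one, blk_sub]; simp
  rw [IsQuasiUnitary, hstar_mul, hmul_star]
  exact ⟨(norm_blk_diag_le _ _).trans_lt (max_lt ha.1 hd.1),
    (norm_blk_diag_le _ _).trans_lt (max_lt ha.2 hd.2)⟩

noncomputable def blkRotation (θ : ℝ) : WithLp 2 (H × H) →L[ℂ] WithLp 2 (H × H) :=
  blk ((Real.cos θ : ℂ) • 1) (-((Real.sin θ : ℂ) • 1))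
    ((Real.sin θ : ℂ) • 1) ((Real.cos θ : ℂ) • 1)

theorem star_blkRotation [CompleteSpace H] (θ : ℝ) :
    star (blkRotation (H := H) θ) = blkRotation (-θ) := by
  simp only [blkRotation, star_blk, star_neg, star_smul, star_one, Complex.star_def,
    Complex.conj_ofReal, Real.cos_neg, Real.sin_neg, Complex.ofReal_neg, neg_smul, neg_neg]

theorem blkRotation_mem_unitary [CompleteSpace H] (θ : ℝ) :
    blkRotation (H := H) θ ∈ unitary (WithLp 2 (H × H) →L[ℂ] WithLp 2 (H × H)) := by
  rw [Unitary.mem_iff, star_blkRotation, blkRotation, blkRotation, blk_mul, blk_mul, ← blk_one]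
  simp only [Real.cos_neg, Real.sin_neg, Complex.ofReal_neg, neg_smul, neg_neg]
  constructor <;> congr 1 <;> simp only [smul_mul_smul, mul_one, mul_neg, neg_mul, neg_neg] <;>
    match_scalars <;> first | linear_combination Complex.cos_sq_add_sin_sq (θ : ℂ) | ring

theorem blkRotation_eq_smul_add (θ : ℝ) :
    blkRotation (H := H) θ = (Real.cos θ : ℂ) • 1 + (Real.sin θ : ℂ) • blk 0 (-1) 1 0 := by
  rw [← blk_one, blk_smul, blk_smul, blk_add, blkRotation]
  simp

theorem continuous_blkRotation [CompleteSpace H] : Continuous (blkRotation (H := H)) := by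
  simp only [funext blkRotation_eq_smul_add]
  exact ((Complex.continuous_ofReal.comp Real.continuous_cos).smul continuous_const).add
    ((Complex.continuous_ofReal.comp Real.continuous_sin).smul continuous_const)

theorem blkRotation_zero : blkRotation (H := H) 0 = 1 := by
  simp [blkRotation, blk_one]

theorem blkRotation_pi_div_two : blkRotation (H := H) (Real.pi / 2) = blk 0 (-1) 1 0 := by
  simp [blkRotation]

theorem rotationPath_eq (u v : H →L[ℂ] H) (t : ℝ) :
    rotationPath u v t = blk u 0 0 1 * blkRotation (Real.pi * t / 2) * blk 1 0 0 v *
      blkRotation (-(Real.pi * t / 2)) := by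
  simp only [rotationPath, blkRotation, Real.cos_neg, Real.sin_neg, Complex.ofReal_neg, neg_smul,
    neg_neg]

theorem continuous_rotationPath [CompleteSpace H] (u v : H →L[ℂ] H) :
    Continuous (rotationPath u v) := by
  have hθ : Continuous fun t : ℝ => Real.pi * t / 2 := by fun_prop
  simp only [funext (rotationPath_eq u v)]
  exact ((continuous_const.mul (continuous_blkRotation.comp hθ)).mul continuous_const).mul
    (continuous_blkRotation.comp hθ.neg)

theorem rotationPath_zero [CompleteSpace H] (u v : H →L[ℂ] H) :
    rotationPath u v 0 = blk u 0 0 v := by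
  simp [rotationPath_eq, blkRotation_zero, blk_mul]

theorem rotationPath_one [CompleteSpace H] (u v : H →L[ℂ] H) :
    rotationPath u v 1 = blk (u * v) 0 0 1 := by
  rw [rotationPath_eq, ← star_blkRotation]
  simp [blkRotation_pi_div_two, star_blk, blk_mul]

/-- The rotation path is a norm-continuous path of 3ε-quasi-unitaries from
`diag(u, v)` to `diag(uv, 1)`. -/
theorem rotationPath_quasi_unitary [CompleteSpace H]
    (ε : ℝ) (hε0 : 0 < ε) (hε : ε < 1 / 4) (u v : H →L[ℂ] H)
    (hu1 : ‖star u * u - 1‖ < ε) (hu2 : ‖u * star u - 1‖ < ε)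
    (hv1 : ‖star v * v - 1‖ < ε) (hv2 : ‖v * star v - 1‖ < ε) :
    (∀ t ∈ Set.Icc (0 : ℝ) 1,
      ‖star (rotationPath u v t) * rotationPath u v t - 1‖ < 3 * ε ∧
      ‖rotationPath u v t * star (rotationPath u v t) - 1‖ < 3 * ε) ∧
    ContinuousOn (rotationPath u v) (Set.Icc (0 : ℝ) 1) ∧
    rotationPath u v 0 = blk u 0 0 v ∧
    rotationPath u v 1 = blk (u * v) 0 0 1 := by
  have hD₁ : IsQuasiUnitary ε (blk u 0 0 1) :=
    isQuasiUnitary_blk_diag ⟨hu1, hu2⟩ (isQuasiUnitary_one hε0)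
  have hD₂ : IsQuasiUnitary ε (blk 1 0 0 v) :=
    isQuasiUnitary_blk_diag (isQuasiUnitary_one hε0) ⟨hv1, hv2⟩
  refine ⟨fun t _ => ?_, (continuous_rotationPath u v).continuousOn,
    rotationPath_zero u v, rotationPath_one u v⟩
  have hR := blkRotation_mem_unitary (H := H) (Real.pi * t / 2)
  rw [rotationPath_eq, ← star_blkRotation, mul_assoc (blk u 0 0 1 * _), mul_assoc (blk u 0 0 1)]
  exact (hD₁.mul (hD₂.conj hR)).mono (by nlinarith)
end

section
/- Let A be a unital C*-algebra, 0 < ε < 1/4, and let u be an ε-quasi-unitary in A (‖u*u − 1‖ < ε, ‖uu* − 1‖ < ε). Let w = u(u*u)^{−1/2} be its unitary part. Then ‖u − w‖ < ε, and the linear path from u to w consists of 6ε-quasi-unitaries. -/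
/-!
Since `‖u⋆u - 1‖ < 1` and `‖uu⋆ - 1‖ < 1`, both products are invertible, hence so is `u`, and the
polar decomposition `u = w r` with `r = (u⋆u)^{1/2}` has a unitary factor `w = u r⁻¹`. Then
`‖u - w‖ = ‖w (r - 1)‖ = ‖r - 1‖ ≤ ‖u⋆u - 1‖`, because `|√x - 1| ≤ |x - 1|` on the spectrum.
A point of the segment is `t u + (1 - t) w = w p` with `p = t r + 1 - t` self-adjoint, so both
defects `‖(wp)⋆(wp) - 1‖` and `‖(wp)(wp)⋆ - 1‖` equal `‖p² - 1‖ ≤ 2‖p - 1‖ + ‖p - 1‖²`, where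
`‖p - 1‖ = t ‖r - 1‖ < ε`.
-/

theorem isUnit_of_isUnit_mul_of_isUnit_mul_swap {M : Type*} [Monoid M] {a b : M}
    (hab : IsUnit (a * b)) (hba : IsUnit (b * a)) : IsUnit a := by
  obtain ⟨x, hx⟩ := hab
  obtain ⟨y, hy⟩ := hba
  have hl : (↑y⁻¹ * b) * a = 1 := by rw [mul_assoc, ← hy, Units.inv_mul]
  have hr : a * (b * ↑x⁻¹) = 1 := by rw [← mul_assoc, ← hx, Units.mul_inv]
  exact isUnit_iff_exists.mpr ⟨b * ↑x⁻¹, hr, left_inv_eq_right_inv hl hr ▸ hl⟩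

theorem isUnit_of_norm_sub_one_lt_one {R : Type*} [NormedRing R] [HasSummableGeomSeries R]
    {x : R} (h : ‖x - 1‖ < 1) : IsUnit x := by
  simpa using isUnit_one_sub_of_norm_lt_one (x := 1 - x) (by rwa [norm_sub_rev])

theorem Real.abs_sqrt_sub_one_le (x : ℝ) : |√x - 1| ≤ |x - 1| := by
  rcases le_or_gt 0 x with hx | hx
  · have hfactor : x - 1 = (√x - 1) * (√x + 1) := by nlinarith [Real.sq_sqrt hx]
    rw [hfactor, abs_mul]
    refine le_mul_of_one_le_right (abs_nonneg _) ?_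
    rw [abs_of_nonneg (by positivity)]
    linarith [Real.sqrt_nonneg x]
  · rw [Real.sqrt_eq_zero_of_nonpos hx.le, abs_of_neg (by linarith), abs_of_neg (by linarith)]
    linarith

theorem norm_mul_self_sub_one_le {R : Type*} [NormedRing R] (x : R) :
    ‖x * x - 1‖ ≤ 2 * ‖x - 1‖ + ‖x - 1‖ ^ 2 := by
  have hexpand : x * x - 1 = (x - 1) + (x - 1) + (x - 1) * (x - 1) := by noncomm_ring
  rw [hexpand, two_mul, sq]
  exact (norm_add_le _ _).trans (add_le_add (norm_add_le _ _) (norm_mul_le _ _))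

theorem abs_sub_one_le_norm_sub_one_of_mem_spectrum {A : Type*} [NormedRing A]
    [NormedAlgebra ℝ A] [CompleteSpace A] [NormOneClass A] {a : A} {x : ℝ}
    (hx : x ∈ spectrum ℝ a) : |x - 1| ≤ ‖a - 1‖ := by
  have hmem : x - 1 ∈ spectrum ℝ (a - algebraMap ℝ A 1) := by
    rw [← spectrum.sub_singleton_eq]
    exact Set.sub_mem_sub hx rfl
  simpa using spectrum.norm_le_norm_of_mem hmem

theorem continuousOn_inv_sqrt {s : Set ℝ} (hs : ∀ x ∈ s, 0 < x) :
    ContinuousOn (fun x : ℝ => (√x)⁻¹) s :=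
  Real.continuous_sqrt.continuousOn.inv₀ fun x hx => (Real.sqrt_pos.mpr (hs x hx)).ne'

section CStarAlgebra

variable {A : Type*} [CStarAlgebra A]

theorem norm_cfc_sqrt_sub_one_le {a : A} (ha : IsSelfAdjoint a) :
    ‖cfc Real.sqrt a - 1‖ ≤ ‖a - 1‖ := by
  nontriviality A
  have hsub : cfc (fun x => √x - 1) a = cfc Real.sqrt a - 1 := by
    rw [cfc_sub .., cfc_const_one ..]
  rw [← hsub]
  exact norm_cfc_le (norm_nonneg _) fun x hx =>
    (Real.abs_sqrt_sub_one_le x).trans (abs_sub_one_le_norm_sub_one_of_mem_spectrum hx)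

theorem IsUnit.spectrum_star_mul_self_pos {u : A} (hu : IsUnit u) :
    ∀ x ∈ spectrum ℝ (star u * u), 0 < x := fun x hx =>
  (spectrum_star_mul_self_nonneg x hx).lt_of_ne <| by
    rintro rfl
    exact spectrum.zero_notMem ℝ (hu.star.mul hu) hx

theorem cfc_inv_sqrt_mul_cfc_sqrt {a : A} (ha : IsSelfAdjoint a)
    (hpos : ∀ x ∈ spectrum ℝ a, 0 < x) :
    cfc (fun x : ℝ => (√x)⁻¹) a * cfc Real.sqrt a = 1 := by
  have hcont := continuousOn_inv_sqrt hpos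
  rw [← cfc_mul .., ← cfc_one ℝ a]
  exact cfc_congr fun x hx => inv_mul_cancel₀ (Real.sqrt_pos.mpr (hpos x hx)).ne'

theorem cfc_inv_sqrt_mul_self_mul_cfc_inv_sqrt {a : A} (ha : IsSelfAdjoint a)
    (hpos : ∀ x ∈ spectrum ℝ a, 0 < x) :
    cfc (fun x : ℝ => (√x)⁻¹) a * a * cfc (fun x : ℝ => (√x)⁻¹) a = 1 := by
  have hcont := continuousOn_inv_sqrt hpos
  nth_rewrite 2 [← cfc_id' ℝ a]
  rw [← cfc_mul .., ← cfc_mul .., ← cfc_one ℝ a]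
  refine cfc_congr fun x hx => ?_
  have hsqrt := Real.sqrt_pos.mpr (hpos x hx)
  simp only [Pi.one_apply]
  field_simp
  rw [Real.sq_sqrt (hpos x hx).le]

noncomputable def unitaryPart (u : A) : A :=
  u * cfc (fun x : ℝ => (√x)⁻¹) (star u * u)

theorem IsUnit.unitaryPart_mem_unitary {u : A} (hu : IsUnit u) : unitaryPart u ∈ unitary A := by
  have hpos := hu.spectrum_star_mul_self_pos
  have hb : IsUnit (cfc (fun x : ℝ => (√x)⁻¹) (star u * u)) :=
    isUnit_cfc _ _ (continuousOn_inv_sqrt hpos) (.star_mul_self u) fun x hx =>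
      inv_ne_zero (Real.sqrt_pos.mpr (hpos x hx)).ne'
  refine (hu.mul hb).mem_unitary_of_star_mul_self ?_
  rw [star_mul, (cfc_predicate _ _ : IsSelfAdjoint _).star_eq, mul_assoc,
    ← mul_assoc (star u), ← mul_assoc]
  exact cfc_inv_sqrt_mul_self_mul_cfc_inv_sqrt (.star_mul_self u) hpos

theorem IsUnit.unitaryPart_mul_cfc_sqrt {u : A} (hu : IsUnit u) :
    unitaryPart u * cfc Real.sqrt (star u * u) = u := by
  rw [unitaryPart, mul_assoc,
    cfc_inv_sqrt_mul_cfc_sqrt (.star_mul_self u) hu.spectrum_star_mul_self_pos, mul_one]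

theorem norm_star_mul_self_sub_one_of_mem_unitary {w p : A} (hw : w ∈ unitary A)
    (hp : IsSelfAdjoint p) : ‖star (w * p) * (w * p) - 1‖ = ‖p * p - 1‖ := by
  rw [star_mul, hp.star_eq, mul_assoc, ← mul_assoc (star w), Unitary.star_mul_self_of_mem hw,
    one_mul]

theorem norm_mul_star_self_sub_one_of_mem_unitary {w p : A} (hw : w ∈ unitary A)
    (hp : IsSelfAdjoint p) : ‖w * p * star (w * p) - 1‖ = ‖p * p - 1‖ := by
  have hconj : w * p * star (w * p) - 1 = w * (p * p - 1) * star w := by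
    rw [star_mul, hp.star_eq, mul_sub, sub_mul, mul_one, Unitary.mul_star_self_of_mem hw]
    noncomm_ring
  rw [hconj, CStarRing.norm_mul_mem_unitary _ (Unitary.star_mem hw),
    CStarRing.norm_mem_unitary_mul _ hw]

end CStarAlgebra

theorem quasi_unitary_close_to_unitary_part_general
    {A : Type*} [CStarAlgebra A]
    (ε : ℝ) (hε : ε < 1 / 4) (u : A)
    (h1 : ‖star u * u - 1‖ < ε) (h2 : ‖u * star u - 1‖ < ε) :
    u * cfc (fun x : ℝ => (Real.sqrt x)⁻¹) (star u * u) ∈ unitary A ∧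
    ‖u - u * cfc (fun x : ℝ => (Real.sqrt x)⁻¹) (star u * u)‖ < ε ∧
    ∀ t : ℝ, t ∈ Set.Icc (0 : ℝ) 1 →
      ‖star ((t : ℂ) • u + ((1 - t : ℝ) : ℂ) •
            (u * cfc (fun x : ℝ => (Real.sqrt x)⁻¹) (star u * u))) *
          ((t : ℂ) • u + ((1 - t : ℝ) : ℂ) •
            (u * cfc (fun x : ℝ => (Real.sqrt x)⁻¹) (star u * u))) - 1‖ < 6 * ε ∧
      ‖((t : ℂ) • u + ((1 - t : ℝ) : ℂ) •
            (u * cfc (fun x : ℝ => (Real.sqrt x)⁻¹) (star u * u))) *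
          star ((t : ℂ) • u + ((1 - t : ℝ) : ℂ) •
            (u * cfc (fun x : ℝ => (Real.sqrt x)⁻¹) (star u * u))) - 1‖ < 6 * ε := by
  rw [show u * cfc (fun x : ℝ => (√x)⁻¹) (star u * u) = unitaryPart u from rfl]
  have hu : IsUnit u := isUnit_of_isUnit_mul_of_isUnit_mul_swap
    (isUnit_of_norm_sub_one_lt_one (by linarith)) (isUnit_of_norm_sub_one_lt_one (by linarith))
  have hw := hu.unitaryPart_mem_unitary
  set r := cfc Real.sqrt (star u * u)
  have hr : ‖r - 1‖ < ε := (norm_cfc_sqrt_sub_one_le (.star_mul_self u)).trans_lt h1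
  refine ⟨hw, ?_, fun t ⟨ht0, ht1⟩ => ?_⟩
  · nth_rw 1 [← hu.unitaryPart_mul_cfc_sqrt]
    rwa [← mul_sub_one, CStarRing.norm_mem_unitary_mul _ hw]
  set p : A := t • r + (1 - t) • 1
  have hpath : (t : ℂ) • u + ((1 - t : ℝ) : ℂ) • unitaryPart u = unitaryPart u * p := by
    rw [Complex.coe_smul, Complex.coe_smul, mul_add, mul_smul_comm, mul_smul_comm, mul_one,
      hu.unitaryPart_mul_cfc_sqrt]
  have hp : IsSelfAdjoint p :=
    ((IsSelfAdjoint.all t).smul (cfc_predicate _ _)).add ((IsSelfAdjoint.all _).smul (.one A))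
  have hp1 : ‖p - 1‖ < ε := by
    rw [show p - 1 = t • (r - 1) by simp only [p]; module, norm_smul, Real.norm_of_nonneg ht0]
    nlinarith [norm_nonneg (r - 1)]
  have hpp : ‖p * p - 1‖ < 6 * ε :=
    (norm_mul_self_sub_one_le p).trans_lt (by nlinarith [norm_nonneg (p - 1)])
  rw [hpath, norm_star_mul_self_sub_one_of_mem_unitary hw hp,
    norm_mul_star_self_sub_one_of_mem_unitary hw hp]
  exact ⟨hpp, hpp⟩

/-- An ε-quasi-unitary u is within ε of its unitary part w = u(u*u)^{-1/2},
and the linear path from u to w consists of 6ε-quasi-unitaries. -/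
theorem quasi_unitary_close_to_unitary_part
    {A : Type*} [CStarAlgebra A]
    (ε : ℝ) (hε0 : 0 < ε) (hε : ε < 1 / 4) (u : A)
    (h1 : ‖star u * u - 1‖ < ε) (h2 : ‖u * star u - 1‖ < ε) :
    u * cfc (fun x : ℝ => (Real.sqrt x)⁻¹) (star u * u) ∈ unitary A ∧
    ‖u - u * cfc (fun x : ℝ => (Real.sqrt x)⁻¹) (star u * u)‖ < ε ∧
    ∀ t : ℝ, t ∈ Set.Icc (0 : ℝ) 1 →
      ‖star ((t : ℂ) • u + ((1 - t : ℝ) : ℂ) •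
            (u * cfc (fun x : ℝ => (Real.sqrt x)⁻¹) (star u * u))) *
          ((t : ℂ) • u + ((1 - t : ℝ) : ℂ) •
            (u * cfc (fun x : ℝ => (Real.sqrt x)⁻¹) (star u * u))) - 1‖ < 6 * ε ∧
      ‖((t : ℂ) • u + ((1 - t : ℝ) : ℂ) •
            (u * cfc (fun x : ℝ => (Real.sqrt x)⁻¹) (star u * u))) *
          star ((t : ℂ) • u + ((1 - t : ℝ) : ℂ) •
            (u * cfc (fun x : ℝ => (Real.sqrt x)⁻¹) (star u * u))) - 1‖ < 6 * ε :=
  quasi_unitary_close_to_unitary_part_general ε hε u h1 h2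
end
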